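/- arXiv:2401.17611 — 2 statements merged into one kernel-verified Lean document; each statement's English description precedes it below -/
import Mathlib

section
/- Let d : Fin D → ℝ be the degrees of the D ≥ 1 neighbors of a node u (D also a positive real via coercion), with a ≤ d(i) ≤ b for all i and a < b, let λ > 0 be the diffusion probability, and let J₁, …, J_q (q ≥ 1) be independent random variables on (Ω, ℙ), each uniformly distributed on Fin D. Let DDS = λ·(D + (D/q)·∑_{l=1}^{q} d(J_l)) and DD = λ·(D + ∑_{i} d(i)). Then for every α > 0, ℙ(|DDS − DD| ≥ α·D·λ) ≤ 2·exp(−2·q·α² / (b − a)²). -/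
open MeasureTheory ProbabilityTheory Real

lemma hoeffding_scalar {p : ℝ} (hp0 : 0 ≤ p) (hp1 : p ≤ 1) (h : ℝ) :
    1 - p + p * Real.exp h ≤ Real.exp (p * h + h ^ 2 / 8) := by
  set s : ℝ → ℝ := fun x => 1 - p + p * Real.exp x with hs
  have hspos : ∀ x, 0 < s x := by
    intro x
    rcases eq_or_lt_of_le hp0 with h0 | h0
    · simp only [hs, ← h0]; norm_num
    · have h1 : 0 < p * Real.exp x := by positivity
      have h2 : 0 ≤ 1 - p := by linarith
      simp only [hs]; linarith
  set g : ℝ → ℝ := fun x => p * x + x ^ 2 / 8 - Real.log (s x) with hg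
  set φ : ℝ → ℝ := fun x => p + x / 4 - p * Real.exp x / s x with hφ
  have hsd : ∀ x, HasDerivAt s (p * Real.exp x) x := by
    intro x
    exact ((Real.hasDerivAt_exp x).const_mul p).const_add (1 - p)
  have hgd : ∀ x, HasDerivAt g (φ x) x := by
    intro x
    have h1 : HasDerivAt (fun x : ℝ => p * x + x ^ 2 / 8) (p + x * 2 / 8) x := by
      have := ((hasDerivAt_id x).const_mul p).add ((hasDerivAt_pow 2 x).div_const 8)
      refine this.congr_deriv ?_
      ring
    have h2 : HasDerivAt (fun x => Real.log (s x)) (p * Real.exp x / s x) x :=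
      (hsd x).log (hspos x).ne'
    have := h1.sub h2
    refine this.congr_deriv ?_
    simp only [hφ]; ring
  have hφd : ∀ x, HasDerivAt φ (1 / 4 - (1 - p) * (p * Real.exp x) / (s x) ^ 2) x := by
    intro x
    have h1 : HasDerivAt (fun x : ℝ => p + x / 4) (1 / 4) x := by
      simpa using ((hasDerivAt_id x).div_const 4).const_add p
    have h2 : HasDerivAt (fun x => p * Real.exp x / s x)
        ((p * Real.exp x * s x - p * Real.exp x * (p * Real.exp x)) / (s x) ^ 2) x :=
      ((Real.hasDerivAt_exp x).const_mul p).div (hsd x) (hspos x).ne'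
    have := h1.sub h2
    refine this.congr_deriv ?_
    have : s x = 1 - p + p * Real.exp x := rfl
    field_simp
    ring
  have hφmono : Monotone φ := by
    refine monotone_of_deriv_nonneg (fun x => (hφd x).differentiableAt) ?_
    intro x
    rw [(hφd x).deriv]
    have hx : 0 ≤ (1 - p) * (p * Real.exp x) := by
      have := Real.exp_pos x
      have h1 : 0 ≤ 1 - p := by linarith
      positivity
    have key : 4 * ((1 - p) * (p * Real.exp x)) ≤ (s x) ^ 2 := by
      have hsx : s x = (1 - p) + p * Real.exp x := rfl
      rw [hsx]
      nlinarith [sq_nonneg ((1 - p) - p * Real.exp x)]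
    have h2 : (1 - p) * (p * Real.exp x) / (s x) ^ 2 ≤ 1 / 4 := by
      rw [div_le_div_iff₀ (pow_pos (hspos x) 2) (by norm_num)]
      linarith
    linarith
  have hφ0 : φ 0 = 0 := by
    simp only [hφ, hs]
    norm_num
  have hg0 : g 0 = 0 := by
    simp only [hg, hs]
    norm_num
  have hgnn : ∀ x, 0 ≤ g x := by
    intro x
    rcases le_or_gt 0 x with hx | hx
    · have hmono : MonotoneOn g (Set.Ici (0:ℝ)) := by
        refine monotoneOn_of_deriv_nonneg (convex_Ici 0)
          (fun y _ => (hgd y).differentiableAt.continuousAt.continuousWithinAt)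
          (fun y _ => (hgd y).differentiableAt.differentiableWithinAt) ?_
        intro y hy
        rw [(hgd y).deriv]
        have : φ 0 ≤ φ y := hφmono (le_of_lt (by simpa using hy))
        linarith [hφ0 ▸ this]
      have := hmono (Set.self_mem_Ici) (Set.mem_Ici.mpr hx) hx
      linarith [hg0 ▸ this]
    · have hmono : AntitoneOn g (Set.Iic (0:ℝ)) := by
        refine antitoneOn_of_deriv_nonpos (convex_Iic 0)
          (fun y _ => (hgd y).differentiableAt.continuousAt.continuousWithinAt)
          (fun y _ => (hgd y).differentiableAt.differentiableWithinAt) ?_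
        intro y hy
        rw [(hgd y).deriv]
        have : φ y ≤ φ 0 := hφmono (le_of_lt (by simpa using hy))
        linarith [hφ0 ▸ this]
      have := hmono (Set.mem_Iic.mpr hx.le) (Set.self_mem_Iic) hx.le
      linarith [hg0 ▸ this]
  have := hgnn h
  simp only [hg] at this
  have hlog : Real.log (s h) ≤ p * h + h ^ 2 / 8 := by linarith
  calc s h = Real.exp (Real.log (s h)) := (Real.exp_log (hspos h)).symm
    _ ≤ Real.exp (p * h + h ^ 2 / 8) := Real.exp_le_exp.mpr hlog

lemma integrable_of_bdd {Ω : Type*} [MeasurableSpace Ω] {μ : Measure Ω}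
    [IsProbabilityMeasure μ] {X : Ω → ℝ} (hX : Measurable X) {C : ℝ}
    (hC : ∀ ω, |X ω| ≤ C) : Integrable X μ := by
  refine Integrable.mono' (integrable_const C) hX.aestronglyMeasurable ?_
  exact ae_of_all _ fun ω => hC ω

lemma hoeffding_mgf {Ω : Type*} [MeasurableSpace Ω] (μ : Measure Ω)
    [IsProbabilityMeasure μ] {X : Ω → ℝ} (hX : Measurable X)
    {a b : ℝ} (hab : a < b) (h : ∀ ω, X ω ∈ Set.Icc a b) (t : ℝ) :
    mgf X μ t ≤ Real.exp (t * μ[X] + t ^ 2 * (b - a) ^ 2 / 8) := by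
  have hXabs : ∀ ω, |X ω| ≤ |a| ⊔ |b| := by
    intro ω
    exact abs_le_max_abs_abs (h ω).1 (h ω).2
  have hXint : Integrable X μ := integrable_of_bdd hX hXabs
  set m : ℝ := μ[X] with hm
  have hma : a ≤ m := by
    rw [hm]
    calc a = μ[fun _ => a] := by simp
    _ ≤ μ[X] := integral_mono (f := fun _ => a) (g := X) (integrable_const a) hXint fun ω => (h ω).1
  have hmb : m ≤ b := by
    rw [hm]
    calc μ[X] ≤ μ[fun _ => b] := integral_mono (f := X) (g := fun _ => b) hXint (integrable_const b) fun ω => (h ω).2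
    _ = b := by simp
  set p : ℝ := (m - a) / (b - a) with hp
  have hba : (0:ℝ) < b - a := by linarith
  have hp0 : 0 ≤ p := by apply div_nonneg <;> linarith
  have hp1 : p ≤ 1 := by rw [div_le_one hba]; linarith
  -- pointwise convexity bound
  have hpt : ∀ ω, Real.exp (t * X ω) ≤
      (b - X ω) / (b - a) * Real.exp (t * a) + (X ω - a) / (b - a) * Real.exp (t * b) := by
    intro ω
    have hθ0 : 0 ≤ (X ω - a) / (b - a) := by apply div_nonneg <;> linarith [(h ω).1]
    have hθ0' : 0 ≤ (b - X ω) / (b - a) := by apply div_nonneg <;> linarith [(h ω).2]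
    have hθs : (b - X ω) / (b - a) + (X ω - a) / (b - a) = 1 := by field_simp; ring
    have := convexOn_exp.2 (Set.mem_univ (t * a)) (Set.mem_univ (t * b)) hθ0' hθ0 hθs
    simp only [smul_eq_mul] at this
    refine Eq.trans_le ?_ this
    congr 1
    field_simp
    ring
  -- integrate
  have hint1 : Integrable (fun ω => Real.exp (t * X ω)) μ := by
    refine integrable_of_bdd (by fun_prop) (C := Real.exp (|t| * (|a| ⊔ |b|))) ?_
    intro ω
    rw [abs_of_pos (Real.exp_pos _), Real.exp_le_exp]
    calc t * X ω ≤ |t * X ω| := le_abs_self _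
    _ = |t| * |X ω| := abs_mul _ _
    _ ≤ |t| * (|a| ⊔ |b|) := mul_le_mul_of_nonneg_left (hXabs ω) (abs_nonneg t)
  have hmgf : mgf X μ t ≤ (b - m) / (b - a) * Real.exp (t * a)
      + (m - a) / (b - a) * Real.exp (t * b) := by
    rw [mgf]
    have hfe : (fun ω => (b - X ω) / (b - a) * Real.exp (t * a)
        + (X ω - a) / (b - a) * Real.exp (t * b))
        = fun ω => (b * Real.exp (t * a) - a * Real.exp (t * b)) / (b - a)
          + (Real.exp (t * b) - Real.exp (t * a)) / (b - a) * X ω := by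
      funext ω; ring
    have hrhs : Integrable (fun ω => (b - X ω) / (b - a) * Real.exp (t * a)
        + (X ω - a) / (b - a) * Real.exp (t * b)) μ := by
      rw [hfe]
      exact (integrable_const _).add (hXint.const_mul _)
    calc μ[fun ω => Real.exp (t * X ω)] ≤ μ[fun ω => (b - X ω) / (b - a) * Real.exp (t * a)
        + (X ω - a) / (b - a) * Real.exp (t * b)] :=
        integral_mono (f := fun ω => Real.exp (t * X ω)) hint1 hrhs hpt
    _ = (b - m) / (b - a) * Real.exp (t * a) + (m - a) / (b - a) * Real.exp (t * b) := by
        rw [hfe, integral_add (integrable_const _) (hXint.const_mul _),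
          integral_const_mul, integral_const]
        simp only [measure_univ, probReal_univ, ENNReal.toReal_one, smul_eq_mul, one_mul, ← hm]
        field_simp
        ring
  -- apply scalar lemma with h := t*(b-a)
  have key := hoeffding_scalar hp0 hp1 (t * (b - a))
  have heq : (b - m) / (b - a) * Real.exp (t * a) + (m - a) / (b - a) * Real.exp (t * b)
      = Real.exp (t * a) * (1 - p + p * Real.exp (t * (b - a))) := by
    have e3 : Real.exp (t * b) = Real.exp (t * a) * Real.exp (t * (b - a)) := by
      rw [← Real.exp_add]; ring_nf
    rw [hp, e3]
    field_simp
    ring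
  have hfin : Real.exp (t * a) * Real.exp (p * (t * (b - a)) + (t * (b - a)) ^ 2 / 8)
      = Real.exp (t * m + t ^ 2 * (b - a) ^ 2 / 8) := by
    rw [← Real.exp_add]
    congr 1
    have hpb : p * (b - a) = m - a := by rw [hp]; field_simp
    linear_combination t * hpb
  calc mgf X μ t ≤ (b - m) / (b - a) * Real.exp (t * a)
      + (m - a) / (b - a) * Real.exp (t * b) := hmgf
  _ = Real.exp (t * a) * (1 - p + p * Real.exp (t * (b - a))) := heq
  _ ≤ Real.exp (t * a) * Real.exp (p * (t * (b - a)) + (t * (b - a)) ^ 2 / 8) :=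
      mul_le_mul_of_nonneg_left key (Real.exp_pos _).le
  _ = _ := hfin

/-- **Tail bound for the diffusion degree estimator.**
A node `u` has degree `D ≥ 1` and its neighbors have degrees `d : Fin D → ℝ` with
`a ≤ d i ≤ b` and `a < b`. With `J 1, …, J q` (`q ≥ 1`) independent and each uniformly
distributed on `Fin D`, the estimate `DDS = λ·(D + (D/q)·∑ l, d (J l))` and the exact
value `DD = λ·(D + ∑ i, d i)` satisfy, for every `α > 0`,
`μ(|DDS − DD| ≥ α·D·λ) ≤ 2·exp(−2·q·α²/(b − a)²)`. -/
theorem DDS_tail_bound {Ω : Type*} [MeasurableSpace Ω]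
    (μ : Measure Ω) [IsProbabilityMeasure μ]
    (D : ℕ) (hD : 1 ≤ D) (d : Fin D → ℝ)
    (a b : ℝ) (hab : a < b) (hbdd : ∀ i, d i ∈ Set.Icc a b)
    (lam : ℝ) (hlam : 0 < lam)
    (q : ℕ) (hq : 1 ≤ q)
    (J : Fin q → Ω → Fin D) (hJ : ∀ l, Measurable (J l))
    (hindep : iIndepFun J μ)
    (hunif : ∀ l : Fin q, ∀ i : Fin D, μ ((J l) ⁻¹' {i}) = 1 / (D : ENNReal))
    (α : ℝ) (hα : 0 < α) :
    μ {ω | α * (D : ℝ) * lam ≤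
        |lam * ((D : ℝ) + ((D : ℝ) / (q : ℝ)) * ∑ l : Fin q, d (J l ω))
          - lam * ((D : ℝ) + ∑ i, d i)|}
      ≤ ENNReal.ofReal (2 * Real.exp (-2 * q * α ^ 2 / (b - a) ^ 2)) := by
  have hDpos : (0:ℝ) < D := by exact_mod_cast hD
  have hqpos : (0:ℝ) < q := by exact_mod_cast hq
  have hba : (0:ℝ) < b - a := by linarith
  set c : ℝ := (b - a) ^ 2 with hc
  have hcpos : 0 < c := by positivity
  set m : ℝ := (∑ i, d i) / D with hm
  set Y : Fin q → Ω → ℝ := fun l ω => d (J l ω) with hY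
  have hYmeas : ∀ l, Measurable (Y l) := fun l => (measurable_of_countable d).comp (hJ l)
  have hYindep : iIndepFun Y μ :=
    hindep.comp (fun _ => d) (fun _ => measurable_of_countable d)
  have hYbdd : ∀ l ω, Y l ω ∈ Set.Icc a b := fun l ω => hbdd _
  -- mean of each Y l is m
  have hmean : ∀ l, μ[Y l] = m := by
    intro l
    have h1 : μ[Y l] = ∫ x, d x ∂(μ.map (J l)) :=
      (integral_map (hJ l).aemeasurable (measurable_of_countable d).aestronglyMeasurable).symm
    rw [h1, integral_fintype (f := d) (by
      have : IsProbabilityMeasure (μ.map (J l)) := Measure.isProbabilityMeasure_map (hJ l).aemeasurable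
      exact integrable_of_bdd (measurable_of_countable d)
        (C := |a| ⊔ |b|) (fun i => abs_le_max_abs_abs (hbdd i).1 (hbdd i).2))]
    have h2 : ∀ i : Fin D, (μ.map (J l)).real {i} = 1 / (D:ℝ) := by
      intro i
      rw [measureReal_def, Measure.map_apply (hJ l) (measurableSet_singleton i), hunif l i]
      rw [ENNReal.toReal_div]
      simp
    simp only [h2, smul_eq_mul, hm]
    rw [Finset.sum_congr rfl (fun i _ => one_div_mul_eq_div (D:ℝ) (d i)), ← Finset.sum_div]
  -- mgf bound for the sum
  set S : Ω → ℝ := fun ω => ∑ l : Fin q, d (J l ω) with hS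
  have hSsum : (∑ l : Fin q, Y l) = S := by
    funext ω; rw [Finset.sum_apply]
  have hmgf_sum : ∀ t : ℝ, mgf S μ t ≤ Real.exp (t * (q * m) + q * t ^ 2 * c / 8) := by
    intro t
    rw [← hSsum, hYindep.mgf_sum hYmeas]
    calc ∏ l : Fin q, mgf (Y l) μ t ≤ ∏ _l : Fin q, Real.exp (t * m + t ^ 2 * c / 8) := by
          refine Finset.prod_le_prod (fun l _ => mgf_nonneg) (fun l _ => ?_)
          have := hoeffding_mgf μ (hYmeas l) hab (hYbdd l) t
          rwa [hmean l] at this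
    _ = Real.exp (t * (q * m) + q * t ^ 2 * c / 8) := by
          rw [Finset.prod_const, ← Real.exp_nat_mul]
          congr 1
          simp only [Finset.card_univ, Fintype.card_fin]
          ring
  -- integrability of exp(t * S)
  have hSmeas : Measurable S := by
    apply Finset.measurable_sum
    intro l _
    exact (measurable_of_countable d).comp (hJ l)
  have hint : ∀ t : ℝ, Integrable (fun ω => Real.exp (t * S ω)) μ := by
    intro t
    refine integrable_of_bdd (by fun_prop) (C := Real.exp (|t| * (q * (|a| ⊔ |b|)))) ?_
    intro ω
    rw [abs_of_pos (Real.exp_pos _), Real.exp_le_exp]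
    calc t * S ω ≤ |t * S ω| := le_abs_self _
    _ = |t| * |S ω| := abs_mul _ _
    _ ≤ |t| * (q * (|a| ⊔ |b|)) := by
        refine mul_le_mul_of_nonneg_left ?_ (abs_nonneg t)
        calc |S ω| ≤ ∑ l : Fin q, |d (J l ω)| := Finset.abs_sum_le_sum_abs _ _
        _ ≤ ∑ _l : Fin q, (|a| ⊔ |b|) := Finset.sum_le_sum fun l _ =>
            abs_le_max_abs_abs (hbdd _).1 (hbdd _).2
        _ = q * (|a| ⊔ |b|) := by simp [Finset.card_univ]
  -- Chernoff, upper tail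
  set t : ℝ := 4 * α / c with ht
  have htpos : 0 < t := by positivity
  have hexp : -t * (q * m + q * α) + (t * (q * m) + q * t ^ 2 * c / 8)
      = -2 * q * α ^ 2 / c := by
    rw [ht]; field_simp; ring
  have hup : (μ {ω | q * m + q * α ≤ S ω}).toReal ≤ Real.exp (-2 * q * α ^ 2 / c) := by
    calc (μ {ω | q * m + q * α ≤ S ω}).toReal
        ≤ Real.exp (-t * (q * m + q * α)) * mgf S μ t :=
          measure_ge_le_exp_mul_mgf (q * m + q * α) htpos.le (hint t)
    _ ≤ Real.exp (-t * (q * m + q * α)) * Real.exp (t * (q * m) + q * t ^ 2 * c / 8) :=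
          mul_le_mul_of_nonneg_left (hmgf_sum t) (Real.exp_pos _).le
    _ = Real.exp (-2 * q * α ^ 2 / c) := by rw [← Real.exp_add, hexp]
  have hexp2 : -(-t) * (q * m - q * α) + ((-t) * (q * m) + q * (-t) ^ 2 * c / 8)
      = -2 * q * α ^ 2 / c := by
    rw [ht]; field_simp; ring
  have hlo : (μ {ω | S ω ≤ q * m - q * α}).toReal ≤ Real.exp (-2 * q * α ^ 2 / c) := by
    calc (μ {ω | S ω ≤ q * m - q * α}).toReal
        ≤ Real.exp (-(-t) * (q * m - q * α)) * mgf S μ (-t) :=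
          measure_le_le_exp_mul_mgf (q * m - q * α) (by linarith) (hint (-t))
    _ ≤ Real.exp (-(-t) * (q * m - q * α)) * Real.exp ((-t) * (q * m) + q * (-t) ^ 2 * c / 8) :=
          mul_le_mul_of_nonneg_left (hmgf_sum (-t)) (Real.exp_pos _).le
    _ = Real.exp (-2 * q * α ^ 2 / c) := by rw [← Real.exp_add, hexp2]
  -- event inclusion
  have hsub : {ω | α * (D : ℝ) * lam ≤
        |lam * ((D : ℝ) + ((D : ℝ) / (q : ℝ)) * ∑ l : Fin q, d (J l ω))
          - lam * ((D : ℝ) + ∑ i, d i)|}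
      ⊆ {ω | q * m + q * α ≤ S ω} ∪ {ω | S ω ≤ q * m - q * α} := by
    intro ω hω
    simp only [Set.mem_setOf_eq] at hω
    have hDm : (∑ i, d i) = D * m := by rw [hm]; field_simp
    have hexpr : lam * ((D : ℝ) + ((D : ℝ) / (q : ℝ)) * ∑ l : Fin q, d (J l ω))
        - lam * ((D : ℝ) + ∑ i, d i) = lam * D / q * (S ω - q * m) := by
      rw [hDm, hS]; field_simp; ring
    rw [hexpr, abs_mul, abs_of_pos (by positivity : (0:ℝ) < lam * D / q)] at hω
    have hkey : q * α ≤ |S ω - q * m| := by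
      have h1 : lam * D / q * (q * α) ≤ lam * D / q * |S ω - q * m| := by
        calc lam * D / q * (q * α) = α * D * lam := by field_simp
        _ ≤ _ := hω
      exact le_of_mul_le_mul_left h1 (by positivity)
    rcases le_abs.mp hkey with h1 | h1
    · left; simp only [Set.mem_setOf_eq]; linarith
    · right; simp only [Set.mem_setOf_eq]; linarith
  -- conclude
  have hE : Real.exp (-2 * q * α ^ 2 / (b - a) ^ 2) = Real.exp (-2 * q * α ^ 2 / c) := by rw [hc]
  calc μ {ω | α * (D : ℝ) * lam ≤
        |lam * ((D : ℝ) + ((D : ℝ) / (q : ℝ)) * ∑ l : Fin q, d (J l ω))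
          - lam * ((D : ℝ) + ∑ i, d i)|}
      ≤ μ ({ω | q * m + q * α ≤ S ω} ∪ {ω | S ω ≤ q * m - q * α}) := measure_mono hsub
  _ ≤ μ {ω | q * m + q * α ≤ S ω} + μ {ω | S ω ≤ q * m - q * α} := measure_union_le _ _
  _ ≤ ENNReal.ofReal (Real.exp (-2 * q * α ^ 2 / c))
      + ENNReal.ofReal (Real.exp (-2 * q * α ^ 2 / c)) := by
      gcongr
      · rw [← ENNReal.ofReal_toReal (measure_ne_top μ _)]
        exact ENNReal.ofReal_le_ofReal hup
      · rw [← ENNReal.ofReal_toReal (measure_ne_top μ _)]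
        exact ENNReal.ofReal_le_ofReal hlo
  _ = ENNReal.ofReal (2 * Real.exp (-2 * q * α ^ 2 / (b - a) ^ 2)) := by
      rw [hE, ← ENNReal.ofReal_add (Real.exp_pos _).le (Real.exp_pos _).le]
      congr 1
      ring
end

section
/- (Error bound with failure probability δ, Lemma 1) Let d : Fin D → ℝ be the degrees of the D ≥ 1 neighbors of a node u, with a ≤ d(i) ≤ b for all i and a < b, let λ > 0, and let J₁, …, J_q (q ≥ 1) be independent random variables on (Ω, ℙ), each uniformly distributed on Fin D. Let DDS = λ·(D + (D/q)·∑_{l=1}^{q} d(J_l)) and DD = λ·(D + ∑_{i} d(i)). If ε, δ ∈ (0, 1) satisfy 2·exp(−2·q·ε²) ≤ δ, then ℙ(|DDS − DD| ≤ ε·(b − a)·D·λ) ≥ 1 − δ. -/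
open MeasureTheory ProbabilityTheory Real

lemma hoeffding_core (p : ℝ) (hp0 : 0 ≤ p) (hp1 : p ≤ 1) (h : ℝ) :
    (1 - p) * Real.exp (-p * h) + p * Real.exp ((1 - p) * h) ≤ Real.exp (h ^ 2 / 8) := by
  rcases eq_or_lt_of_le hp0 with h0 | h0
  · simp only [← h0, sub_zero, one_mul, neg_zero, zero_mul, exp_zero, zero_mul, add_zero]
    exact Real.one_le_exp (by positivity)
  rcases eq_or_lt_of_le hp1 with h1 | h1
  · simp only [h1, sub_self, zero_mul, exp_zero, one_mul, zero_mul, zero_add]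
    exact Real.one_le_exp (by positivity)
  -- now 0 < p < 1
  set u : ℝ → ℝ := fun x => 1 - p + p * Real.exp x with hu_def
  have hu : ∀ x, 0 < u x := fun x => by
    have := Real.exp_pos x
    simp only [hu_def]
    nlinarith
  set g : ℝ → ℝ := fun x => p * x + x ^ 2 / 8 - Real.log (u x) with hg_def
  set g1 : ℝ → ℝ := fun x => p + x / 4 - p * Real.exp x / u x with hg1_def
  have hdu : ∀ x, HasDerivAt u (p * Real.exp x) x := fun x => by
    exact ((Real.hasDerivAt_exp x).const_mul p).const_add (1 - p)
  have hdg : ∀ x, HasDerivAt g (g1 x) x := by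
    intro x
    have h1 : HasDerivAt (fun y : ℝ => p * y) p x := by
      simpa using (hasDerivAt_id x).const_mul p
    have h2 : HasDerivAt (fun y : ℝ => y ^ 2 / 8) (x / 4) x := by
      have := (hasDerivAt_pow 2 x).div_const 8
      exact this.congr_deriv (by norm_num; ring)
    have h3 : HasDerivAt (fun y => Real.log (u y)) (p * Real.exp x / u x) x :=
      (hdu x).log (hu x).ne'
    exact (h1.add h2).sub h3
  have hdg1 : ∀ x, HasDerivAt g1 (1 / 4 - p * Real.exp x * (1 - p) / (u x) ^ 2) x := by
    intro x
    have h2 : HasDerivAt (fun y : ℝ => p + y / 4) (1 / 4) x := by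
      simpa using ((hasDerivAt_id x).div_const 4).const_add p
    have h3 : HasDerivAt (fun y => p * Real.exp y / u y)
        ((p * Real.exp x * u x - p * Real.exp x * (p * Real.exp x)) / (u x) ^ 2) x :=
      ((Real.hasDerivAt_exp x).const_mul p).div (hdu x) (hu x).ne'
    have : HasDerivAt g1 (1 / 4 -
        (p * Real.exp x * u x - p * Real.exp x * (p * Real.exp x)) / (u x) ^ 2) x := h2.sub h3
    convert this using 1
    have hx := (hu x).ne'
    field_simp
    ring
  have hg1mono : Monotone g1 := by
    apply monotone_of_deriv_nonneg (fun x => (hdg1 x).differentiableAt)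
    intro x
    rw [(hdg1 x).deriv]
    rw [sub_nonneg, div_le_iff₀ (pow_pos (hu x) 2)]
    have hux : u x = 1 - p + p * Real.exp x := rfl
    rw [hux]
    nlinarith [sq_nonneg ((1 - p) - p * Real.exp x), Real.exp_pos x]
  have hg10 : g1 0 = 0 := by
    simp [hg1_def, hu_def]
  have hgnonneg : ∀ x, 0 ≤ g x := by
    have hg0 : g 0 = 0 := by simp [hg_def, hu_def]
    intro x
    rcases le_or_gt 0 x with hx | hx
    · have hmono : MonotoneOn g (Set.Ici 0) := by
        apply monotoneOn_of_deriv_nonneg (convex_Ici 0)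
          (fun y _ => ((hdg y).differentiableAt).continuousAt.continuousWithinAt)
          (fun y _ => ((hdg y).differentiableAt).differentiableWithinAt)
        intro y hy
        rw [(hdg y).deriv, ← hg10]
        exact hg1mono (le_of_lt (by simpa using hy))
      have := hmono (Set.self_mem_Ici) hx hx
      rwa [hg0] at this
    · have hanti : AntitoneOn g (Set.Iic 0) := by
        apply antitoneOn_of_deriv_nonpos (convex_Iic 0)
          (fun y _ => ((hdg y).differentiableAt).continuousAt.continuousWithinAt)
          (fun y _ => ((hdg y).differentiableAt).differentiableWithinAt)
        intro y hy
        rw [(hdg y).deriv, ← hg10]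
        exact hg1mono (le_of_lt (by simpa using hy))
      have := hanti hx.le (Set.self_mem_Iic) hx.le
      rwa [hg0] at this
    
  have hlog : Real.log (u h) ≤ p * h + h ^ 2 / 8 := by
    have := hgnonneg h
    simp only [hg_def] at this
    linarith
  have hule : u h ≤ Real.exp (p * h + h ^ 2 / 8) := by
    calc u h = Real.exp (Real.log (u h)) := (Real.exp_log (hu h)).symm
    _ ≤ _ := Real.exp_le_exp.2 hlog
  have key : Real.exp (-p * h) * u h ≤ Real.exp (h ^ 2 / 8) := by
    calc Real.exp (-p * h) * u h ≤ Real.exp (-p * h) * Real.exp (p * h + h ^ 2 / 8) := by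
          exact mul_le_mul_of_nonneg_left hule (Real.exp_pos _).le
    _ = Real.exp (h ^ 2 / 8) := by rw [← Real.exp_add]; ring_nf
  calc (1 - p) * Real.exp (-p * h) + p * Real.exp ((1 - p) * h)
      = Real.exp (-p * h) * u h := by
        simp only [hu_def]
        rw [show (1 - p) * h = h + -p * h by ring, Real.exp_add]
        ring
  _ ≤ _ := key


lemma integral_comp_uniform {Ω : Type*} [MeasurableSpace Ω] (μ : Measure Ω)
    [IsProbabilityMeasure μ] (D : ℕ) (g : Fin D → ℝ) (J : Ω → Fin D) (hJm : Measurable J)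
    (hunif : ∀ i, μ (J ⁻¹' {i}) = 1 / (D : ENNReal)) :
    ∫ ω, g (J ω) ∂μ = (∑ i, g i) / D := by
  haveI : IsProbabilityMeasure (μ.map J) := Measure.isProbabilityMeasure_map hJm.aemeasurable
  rw [← integral_map hJm.aemeasurable (measurable_of_finite g).aestronglyMeasurable,
    integral_fintype (Integrable.of_finite)]
  have : ∀ i : Fin D, ((μ.map J) {i}).toReal = 1 / (D : ℝ) := by
    intro i
    rw [Measure.map_apply hJm (measurableSet_singleton i), hunif i]
    simp [ENNReal.toReal_div]
  simp only [Measure.real, this, smul_eq_mul]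
  rw [Finset.sum_div]
  simp [div_eq_mul_inv, mul_comm, Finset.sum_mul]


lemma hoeffding_discrete (D : ℕ) (hD : 0 < D) (d : Fin D → ℝ) (a b : ℝ) (hab : a < b)
    (hbdd : ∀ i, d i ∈ Set.Icc a b) (t : ℝ) :
    (∑ i, Real.exp (t * (d i - (∑ j, d j) / D))) / D
      ≤ Real.exp (t ^ 2 * (b - a) ^ 2 / 8) := by
  have hD' : (0:ℝ) < D := by exact_mod_cast hD
  set m : ℝ := (∑ j, d j) / D with hm_def
  have hma : a ≤ m := by
    rw [hm_def, le_div_iff₀ hD']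
    calc a * D = ∑ _j : Fin D, a := by simp [mul_comm]
    _ ≤ ∑ j, d j := Finset.sum_le_sum fun i _ => (hbdd i).1
  have hmb : m ≤ b := by
    rw [hm_def, div_le_iff₀ hD']
    calc ∑ j, d j ≤ ∑ _j : Fin D, b := Finset.sum_le_sum fun i _ => (hbdd i).2
    _ = b * D := by simp [mul_comm]
  have hba : (0:ℝ) < b - a := sub_pos.2 hab
  set p : ℝ := (m - a) / (b - a) with hp_def
  have hp0 : 0 ≤ p := div_nonneg (by linarith) hba.le
  have hp1 : p ≤ 1 := by rw [hp_def, div_le_one hba]; linarith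
  set h : ℝ := t * (b - a) with hh_def
  -- pointwise convexity bound
  have hpt : ∀ i, Real.exp (t * (d i - m)) ≤
      ((b - d i) / (b - a)) * Real.exp (t * (a - m))
        + ((d i - a) / (b - a)) * Real.exp (t * (b - m)) := by
    intro i
    have hx1 := (hbdd i).1
    have hx2 := (hbdd i).2
    have hθ : (0:ℝ) ≤ (b - d i) / (b - a) := div_nonneg (by linarith) hba.le
    have hθ' : (0:ℝ) ≤ (d i - a) / (b - a) := div_nonneg (by linarith) hba.le
    have hsum : (b - d i) / (b - a) + (d i - a) / (b - a) = 1 := by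
      field_simp
      ring
    have := convexOn_exp.2 (Set.mem_univ (t * (a - m))) (Set.mem_univ (t * (b - m)))
      hθ hθ' hsum
    simp only [smul_eq_mul] at this
    convert this using 2
    case e'_3 => field_simp; ring
    rfl
  -- average
  have havg : (∑ i, Real.exp (t * (d i - m))) / D ≤
      (1 - p) * Real.exp (-p * h) + p * Real.exp ((1 - p) * h) := by
    have hsum : (∑ i, Real.exp (t * (d i - m))) ≤
        ∑ i, (((b - d i) / (b - a)) * Real.exp (t * (a - m))
          + ((d i - a) / (b - a)) * Real.exp (t * (b - m))) :=
      Finset.sum_le_sum fun i _ => hpt i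
    have hsum2 : ∑ i, (((b - d i) / (b - a)) * Real.exp (t * (a - m))
          + ((d i - a) / (b - a)) * Real.exp (t * (b - m)))
        = (D * (b - m) / (b - a)) * Real.exp (t * (a - m))
          + (D * (m - a) / (b - a)) * Real.exp (t * (b - m)) := by
      rw [Finset.sum_add_distrib, ← Finset.sum_mul, ← Finset.sum_mul]
      congr 2
      · rw [← Finset.sum_div]
        congr 1
        rw [Finset.sum_sub_distrib, Finset.sum_const, Finset.card_univ, Fintype.card_fin,
          hm_def]
        field_simp
        ring
      · rw [← Finset.sum_div]
        congr 1
        rw [Finset.sum_sub_distrib, Finset.sum_const, Finset.card_univ, Fintype.card_fin,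
          hm_def]
        field_simp
        rw [nsmul_eq_mul]
    have e1 : -p * h = t * (a - m) := by rw [hp_def, hh_def]; field_simp; ring
    have e2 : (1 - p) * h = t * (b - m) := by rw [hp_def, hh_def]; field_simp; ring
    have key : ((D * (b - m) / (b - a)) * Real.exp (t * (a - m))
        + (D * (m - a) / (b - a)) * Real.exp (t * (b - m))) / D
        = (1 - p) * Real.exp (-p * h) + p * Real.exp ((1 - p) * h) := by
      rw [e1, e2, hp_def]
      field_simp
      ring
    rw [← key, ← hsum2]
    gcongr
  calc (∑ i, Real.exp (t * (d i - m))) / D ≤ _ := havg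
  _ ≤ Real.exp (h ^ 2 / 8) := hoeffding_core p hp0 hp1 h
  _ = Real.exp (t ^ 2 * (b - a) ^ 2 / 8) := by rw [hh_def]; ring_nf


/-- **Error bound with failure probability δ (Lemma 1).**
A node `u` has degree `D ≥ 1` and its neighbors have degrees `d : Fin D → ℝ` with
`a ≤ d i ≤ b` and `a < b`. With `J 1, …, J q` (`q ≥ 1`) independent and each uniformly
distributed on `Fin D`, the estimate `DDS = λ·(D + (D/q)·∑ l, d (J l))` and the exact
value `DD = λ·(D + ∑ i, d i)` satisfy: if `ε, δ ∈ (0,1)` with `2·exp(−2·q·ε²) ≤ δ`, then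
`μ(|DDS − DD| ≤ ε·(b − a)·D·λ) ≥ 1 − δ`. -/
theorem DDS_error_bound_delta {Ω : Type*} [MeasurableSpace Ω]
    (μ : Measure Ω) [IsProbabilityMeasure μ]
    (D : ℕ) (hD : 1 ≤ D) (d : Fin D → ℝ)
    (a b : ℝ) (hab : a < b) (hbdd : ∀ i, d i ∈ Set.Icc a b)
    (lam : ℝ) (hlam : 0 < lam)
    (q : ℕ) (hq : 1 ≤ q)
    (J : Fin q → Ω → Fin D) (hJ : ∀ l, Measurable (J l))
    (hindep : iIndepFun J μ)
    (hunif : ∀ l : Fin q, ∀ i : Fin D, μ ((J l) ⁻¹' {i}) = 1 / (D : ENNReal))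
    (ε δ : ℝ) (hε : ε ∈ Set.Ioo (0 : ℝ) 1) (hδ : δ ∈ Set.Ioo (0 : ℝ) 1)
    (hqεδ : 2 * Real.exp (-2 * q * ε ^ 2) ≤ δ) :
    1 - ENNReal.ofReal δ ≤
      μ {ω | |lam * ((D : ℝ) + ((D : ℝ) / (q : ℝ)) * ∑ l : Fin q, d (J l ω))
          - lam * ((D : ℝ) + ∑ i, d i)| ≤ ε * (b - a) * (D : ℝ) * lam} := by
  obtain ⟨hε0, hε1⟩ := hε
  obtain ⟨hδ0, hδ1⟩ := hδ
  have hD0 : (0:ℝ) < D := by exact_mod_cast hD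
  have hq0 : (0:ℝ) < q := by exact_mod_cast hq
  have hba : (0:ℝ) < b - a := sub_pos.2 hab
  set m : ℝ := (∑ j, d j) / D with hm
  set X : Fin q → Ω → ℝ := fun l ω => d (J l ω) - m with hX
  have hXm : ∀ l, Measurable (X l) := fun l =>
    (measurable_of_finite (fun i => d i - m)).comp (hJ l)
  have hindepX : iIndepFun X μ :=
    hindep.comp (fun _ i => d i - m) (fun _ => measurable_of_finite _)
  have hma : a ≤ m := by
    rw [hm, le_div_iff₀ hD0]
    calc a * D = ∑ _j : Fin D, a := by simp [mul_comm]
    _ ≤ ∑ j, d j := Finset.sum_le_sum fun i _ => (hbdd i).1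
  have hmb : m ≤ b := by
    rw [hm, div_le_iff₀ hD0]
    calc ∑ j, d j ≤ ∑ _j : Fin D, b := Finset.sum_le_sum fun i _ => (hbdd i).2
    _ = b * D := by simp [mul_comm]
  -- mgf bound for each variable
  have hmgf : ∀ (l : Fin q) (t : ℝ), mgf (X l) μ t ≤ Real.exp (t ^ 2 * (b - a) ^ 2 / 8) := by
    intro l t
    have heq : mgf (X l) μ t = (∑ i, Real.exp (t * (d i - m))) / D := by
      rw [mgf]
      exact integral_comp_uniform μ D (fun i => Real.exp (t * (d i - m))) (J l) (hJ l) (hunif l)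
    rw [heq, hm]
    exact hoeffding_discrete D (by omega) d a b hab hbdd t
  -- integrability
  have hint : ∀ (l : Fin q) (t : ℝ), Integrable (fun ω => Real.exp (t * X l ω)) μ := by
    intro l t
    refine Integrable.mono'
      (integrable_const (max (Real.exp (t * (a - m))) (Real.exp (t * (b - m)))))
      (((hXm l).const_mul t).exp).aestronglyMeasurable (ae_of_all _ fun ω => ?_)
    rw [Real.norm_eq_abs, abs_of_pos (Real.exp_pos _)]
    have h1 : a - m ≤ X l ω := by
      have := (hbdd (J l ω)).1; simp only [hX]; linarith
    have h2 : X l ω ≤ b - m := by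
      have := (hbdd (J l ω)).2; simp only [hX]; linarith
    rcases le_or_gt 0 t with ht | ht
    · exact le_max_of_le_right (Real.exp_le_exp.2 (by nlinarith))
    · exact le_max_of_le_left (Real.exp_le_exp.2 (by nlinarith))
  set T : Ω → ℝ := ∑ l, X l with hT
  have hTapp : ∀ ω, T ω = ∑ l, X l ω := by
    intro ω; rw [hT]; simp [Finset.sum_apply]
  have hTm : Measurable T := by
    have hfe : T = fun ω => ∑ l, X l ω := funext hTapp
    rw [hfe]; exact Finset.measurable_sum _ fun l _ => hXm l
  have hSmgf : ∀ t, mgf T μ t ≤ Real.exp (q * (t ^ 2 * (b - a) ^ 2 / 8)) := by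
    intro t
    rw [hT, hindepX.mgf_sum hXm]
    calc ∏ l, mgf (X l) μ t ≤ ∏ _l : Fin q, Real.exp (t ^ 2 * (b - a) ^ 2 / 8) :=
      Finset.prod_le_prod (fun l _ => mgf_nonneg) (fun l _ => hmgf l t)
    _ = Real.exp (q * (t ^ 2 * (b - a) ^ 2 / 8)) := by
      rw [Finset.prod_const, ← Real.exp_nat_mul]
      simp
  have hintS : ∀ t, Integrable (fun ω => Real.exp (t * T ω)) μ := by
    intro t
    rw [hT]
    exact hindepX.integrable_exp_mul_sum hXm fun l _ => hint l t
  set s : ℝ := ε * (b - a) * q with hs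
  set t0 : ℝ := 4 * ε / (b - a) with ht0
  have ht0pos : 0 < t0 := by rw [ht0]; positivity
  have hexpo : -t0 * s + (q : ℝ) * (t0 ^ 2 * (b - a) ^ 2 / 8) = -2 * q * ε ^ 2 := by
    rw [hs, ht0]
    field_simp
    ring
  have hup : (μ {ω | s ≤ T ω}).toReal ≤ Real.exp (-2 * q * ε ^ 2) := by
    calc (μ {ω | s ≤ T ω}).toReal ≤ Real.exp (-t0 * s) * mgf T μ t0 :=
      measure_ge_le_exp_mul_mgf s ht0pos.le (hintS t0)
    _ ≤ Real.exp (-t0 * s) * Real.exp ((q : ℝ) * (t0 ^ 2 * (b - a) ^ 2 / 8)) :=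
      mul_le_mul_of_nonneg_left (hSmgf t0) (Real.exp_pos _).le
    _ = Real.exp (-t0 * s + (q : ℝ) * (t0 ^ 2 * (b - a) ^ 2 / 8)) := (Real.exp_add _ _).symm
    _ = Real.exp (-2 * q * ε ^ 2) := by rw [hexpo]
  have hdown : (μ {ω | T ω ≤ -s}).toReal ≤ Real.exp (-2 * q * ε ^ 2) := by
    calc (μ {ω | T ω ≤ -s}).toReal ≤ Real.exp (-(-t0) * (-s)) * mgf T μ (-t0) :=
      measure_le_le_exp_mul_mgf (-s) (by linarith) (hintS (-t0))
    _ ≤ Real.exp (-t0 * s) * Real.exp ((q : ℝ) * ((-t0) ^ 2 * (b - a) ^ 2 / 8)) := by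
      rw [show -(-t0) * (-s) = -t0 * s by ring]
      exact mul_le_mul_of_nonneg_left (hSmgf (-t0)) (Real.exp_pos _).le
    _ = Real.exp (-t0 * s + (q : ℝ) * (t0 ^ 2 * (b - a) ^ 2 / 8)) := by
      rw [← Real.exp_add]; ring_nf
    _ = Real.exp (-2 * q * ε ^ 2) := by rw [hexpo]
  -- the event
  set E : Set Ω := {ω | |T ω| ≤ s} with hE
  have hEmeas : MeasurableSet E := measurableSet_le hTm.abs measurable_const
  have hcompl : μ Eᶜ ≤ ENNReal.ofReal δ := by
    have hsub : Eᶜ ⊆ {ω | s ≤ T ω} ∪ {ω | T ω ≤ -s} := by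
      intro ω hω
      simp only [hE, Set.mem_compl_iff, Set.mem_setOf_eq, not_le] at hω
      simp only [Set.mem_union, Set.mem_setOf_eq]
      rcases lt_abs.1 hω with h | h
      · exact Or.inl h.le
      · exact Or.inr (by linarith)
    have hA : μ {ω | s ≤ T ω} ≤ ENNReal.ofReal (Real.exp (-2 * q * ε ^ 2)) := by
      rw [← ENNReal.ofReal_toReal (measure_ne_top μ _)]
      exact ENNReal.ofReal_le_ofReal hup
    have hB : μ {ω | T ω ≤ -s} ≤ ENNReal.ofReal (Real.exp (-2 * q * ε ^ 2)) := by
      rw [← ENNReal.ofReal_toReal (measure_ne_top μ _)]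
      exact ENNReal.ofReal_le_ofReal hdown
    calc μ Eᶜ ≤ μ ({ω | s ≤ T ω} ∪ {ω | T ω ≤ -s}) := measure_mono hsub
    _ ≤ μ {ω | s ≤ T ω} + μ {ω | T ω ≤ -s} := measure_union_le _ _
    _ ≤ ENNReal.ofReal (Real.exp (-2 * q * ε ^ 2))
        + ENNReal.ofReal (Real.exp (-2 * q * ε ^ 2)) := add_le_add hA hB
    _ = ENNReal.ofReal (2 * Real.exp (-2 * q * ε ^ 2)) := by
      rw [← ENNReal.ofReal_add (Real.exp_pos _).le (Real.exp_pos _).le]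
      ring_nf
    _ ≤ ENNReal.ofReal δ := ENNReal.ofReal_le_ofReal hqεδ
  -- identify the goal event with E
  have hset : {ω | |lam * ((D : ℝ) + ((D : ℝ) / (q : ℝ)) * ∑ l : Fin q, d (J l ω))
          - lam * ((D : ℝ) + ∑ i, d i)| ≤ ε * (b - a) * (D : ℝ) * lam} = E := by
    ext ω
    simp only [hE, Set.mem_setOf_eq]
    have hTe : lam * ((D : ℝ) + ((D : ℝ) / (q : ℝ)) * ∑ l : Fin q, d (J l ω))
        - lam * ((D : ℝ) + ∑ i, d i) = (lam * D / q) * T ω := by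
      rw [hTapp]
      simp only [hX, Finset.sum_sub_distrib, Finset.sum_const, Finset.card_univ,
        Fintype.card_fin, nsmul_eq_mul, hm]
      field_simp
      ring
    have hcoef : (0:ℝ) < lam * D / q := by positivity
    rw [hTe, abs_mul, abs_of_pos hcoef,
      show ε * (b - a) * (D : ℝ) * lam = (lam * D / q) * s by rw [hs]; field_simp,
      mul_le_mul_iff_right₀ hcoef]
  rw [hset]
  have h1 : μ Eᶜ = 1 - μ E := prob_compl_eq_one_sub hEmeas
  have h2 : μ E ≤ 1 := prob_le_one
  calc 1 - ENNReal.ofReal δ ≤ 1 - μ Eᶜ := tsub_le_tsub_left hcompl 1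
  _ = 1 - (1 - μ E) := by rw [h1]
  _ = μ E := ENNReal.sub_sub_cancel ENNReal.one_ne_top h2
end
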